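/- Let u₁, u₂ be bounded measurable functions on a finite measure space, v a function with ∫|v'|² < ∞ and ∫|v|² > 0, and M = max(‖u₁‖_∞, ‖u₂‖_∞). Then |R_{u₁}(v) − R_{u₂}(v)| ≤ e^M · ‖u₁ − u₂‖_∞ · (∫|v'|²)/(∫|v|²), where R_u(v) = (∫ e^u |v'|² + κ²∫|v|²)/∫|v|². -/
import Mathlib


open MeasureTheory Real

lemma exp_diff_le (a b : ℝ) : |Real.exp a - Real.exp b| ≤ Real.exp (max a b) * |a - b| := by
  wlog h : b ≤ a
  · rw [abs_sub_comm, abs_sub_comm a b, max_comm]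
    exact this b a (le_of_not_ge h)
  have h1 : Real.exp a - Real.exp b ≤ Real.exp a * (a - b) := by
    have key : (b - a + 1) * Real.exp a ≤ Real.exp b := by
      have := mul_le_mul_of_nonneg_right (Real.add_one_le_exp (b - a)) (Real.exp_pos a).le
      rwa [← Real.exp_add, sub_add_cancel] at this
    nlinarith [Real.exp_pos a]
  have h2 : Real.exp b ≤ Real.exp a := Real.exp_le_exp.mpr h
  rw [abs_of_nonneg (by linarith), abs_of_nonneg (by linarith), max_eq_left h]
  exact h1

theorem rayleigh_quotient_exp_difference_bound
    {Ω : Type*} [MeasurableSpace Ω] [Nonempty Ω] (μ : Measure Ω)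
    (u₁ u₂ v v' : Ω → ℝ) (κ : ℝ)
    (hb₁ : BddAbove (Set.range fun x => |u₁ x|))
    (hb₂ : BddAbove (Set.range fun x => |u₂ x|))
    (hbd : BddAbove (Set.range fun x => |u₁ x - u₂ x|))
    (hInt₁ : Integrable (fun x => Real.exp (u₁ x) * (v' x) ^ 2) μ)
    (hInt₂ : Integrable (fun x => Real.exp (u₂ x) * (v' x) ^ 2) μ)
    (hIntv' : Integrable (fun x => (v' x) ^ 2) μ)
    (hIntv : Integrable (fun x => (v x) ^ 2) μ)
    (hvpos : 0 < ∫ x, (v x) ^ 2 ∂μ) :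
    |(∫ x, Real.exp (u₁ x) * (v' x) ^ 2 ∂μ + κ ^ 2 * ∫ x, (v x) ^ 2 ∂μ) /
        ∫ x, (v x) ^ 2 ∂μ -
      (∫ x, Real.exp (u₂ x) * (v' x) ^ 2 ∂μ + κ ^ 2 * ∫ x, (v x) ^ 2 ∂μ) /
        ∫ x, (v x) ^ 2 ∂μ| ≤
      Real.exp (max (⨆ z, |u₁ z|) (⨆ z, |u₂ z|)) * (⨆ z, |u₁ z - u₂ z|) *
        ((∫ x, (v' x) ^ 2 ∂μ) / ∫ x, (v x) ^ 2 ∂μ) := by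
  set M : ℝ := max (⨆ z, |u₁ z|) (⨆ z, |u₂ z|) with hM
  set C : ℝ := ⨆ z, |u₁ z - u₂ z| with hC
  have hpt : ∀ x, |Real.exp (u₁ x) * (v' x) ^ 2 - Real.exp (u₂ x) * (v' x) ^ 2|
      ≤ Real.exp M * C * (v' x) ^ 2 := by
    intro x
    have hsq : (0:ℝ) ≤ (v' x) ^ 2 := sq_nonneg _
    rw [← sub_mul, abs_mul, abs_of_nonneg hsq]
    have h1 : |Real.exp (u₁ x) - Real.exp (u₂ x)| ≤ Real.exp M * C := by
      refine (exp_diff_le _ _).trans ?_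
      have hu1 : u₁ x ≤ M := ((le_abs_self _).trans (le_ciSup hb₁ x)).trans (le_max_left _ _)
      have hu2 : u₂ x ≤ M := ((le_abs_self _).trans (le_ciSup hb₂ x)).trans (le_max_right _ _)
      have hc : |u₁ x - u₂ x| ≤ C := le_ciSup hbd x
      have : Real.exp (max (u₁ x) (u₂ x)) ≤ Real.exp M :=
        Real.exp_le_exp.mpr (max_le hu1 hu2)
      exact mul_le_mul this hc (abs_nonneg _) (Real.exp_pos _).le
    exact mul_le_mul_of_nonneg_right h1 hsq
  have hintdiff : |∫ x, (Real.exp (u₁ x) * (v' x) ^ 2 - Real.exp (u₂ x) * (v' x) ^ 2) ∂μ|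
      ≤ Real.exp M * C * ∫ x, (v' x) ^ 2 ∂μ := by
    calc |∫ x, (Real.exp (u₁ x) * (v' x) ^ 2 - Real.exp (u₂ x) * (v' x) ^ 2) ∂μ|
        ≤ ∫ x, |Real.exp (u₁ x) * (v' x) ^ 2 - Real.exp (u₂ x) * (v' x) ^ 2| ∂μ :=
by
          simpa [Real.norm_eq_abs] using
            norm_integral_le_integral_norm (fun x => Real.exp (u₁ x) * (v' x) ^ 2 - Real.exp (u₂ x) * (v' x) ^ 2) (μ := μ)
      _ ≤ ∫ x, Real.exp M * C * (v' x) ^ 2 ∂μ := by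
          refine integral_mono_of_nonneg (Filter.Eventually.of_forall fun x => abs_nonneg _)
            (hIntv'.const_mul _) (Filter.Eventually.of_forall hpt)
      _ = Real.exp M * C * ∫ x, (v' x) ^ 2 ∂μ := integral_const_mul _ _
  have hD := hvpos
  rw [div_sub_div_same, add_sub_add_right_eq_sub, abs_div, abs_of_pos hD,
    ← mul_div_assoc]
  rw [← integral_sub hInt₁ hInt₂]
  exact div_le_div_of_nonneg_right hintdiff hD.le
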